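/- arXiv:1010.0829 — 2 statements merged into one kernel-verified Lean document; each statement's English description precedes it below -/
import Mathlib

section
/- Let f_{tT}(y;z) be the stable-1/2 bridge density as above, for a bridge from 0 to z > 0 over [0,T] with activity parameter c > 0. Then the incomplete first moment satisfies, for 0 ≤ y ≤ z: ∫₀^y u f_{tT}(u;z) du = (t/T) z { Φ(c(Ty−tz)/√(yz(z−y))) − e^{2c²t(T−t)/z} Φ(c((2t−T)y−tz)/√(yz(z−y))) }. -/
open MeasureTheory Real Set

/-- Standard normal cumulative distribution function. -/
noncomputable def Phi (x : ℝ) : ℝ :=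
  (Real.sqrt (2 * Real.pi))⁻¹ * ∫ u in Set.Iic x, Real.exp (-(u ^ 2) / 2)

/-- Marginal density at time `t` of the stable-1/2 bridge from `0` at time `0` to `z` at
time `T`, with activity parameter `c`. -/
noncomputable def stableBridgeDen (c T t z y : ℝ) : ℝ :=
  (1 / Real.sqrt (2 * Real.pi)) * (c * t * (T - t) / T) *
    (Real.exp (-(c ^ 2 * (T * y - t * z) ^ 2) / (2 * y * z * (z - y))) /
      (y - y ^ 2 / z) ^ ((3 : ℝ) / 2))

/-!
The right-hand side `G` is an explicit antiderivative of `u ↦ u f(u)` on `(0, z)`. Differentiating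
it, the factor `exp (2 c² t (T - t) / z)` turns the Gaussian density at the second argument into the
one at the first, and the derivatives of the two arguments differ by `c z² (T - t) u / S³` with
`S = √(u z (z - u))`; this is `u f(u)`. As `y → 0⁺` both arguments tend to `-∞`, so `G(0⁺) = 0`,
and since the integrand is nonnegative it is integrable and the fundamental theorem of calculus
applies on `(0, y)`.
-/

open Filter Topology

section IntegralIic

variable {f : ℝ → ℝ}

theorem integral_Iic_eq_add_intervalIntegral (hf : Integrable f) (a x : ℝ) :
    ∫ u in Iic x, f u = (∫ u in Iic a, f u) + ∫ u in a..x, f u := by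
  rw [← intervalIntegral.integral_Iic_sub_Iic hf.integrableOn hf.integrableOn, add_sub_cancel]

theorem hasDerivAt_integral_Iic (hf : Integrable f) (hfc : Continuous f) (x : ℝ) :
    HasDerivAt (fun x => ∫ u in Iic x, f u) (f x) x := by
  have h : (fun x => ∫ u in Iic x, f u) = fun x => (∫ u in Iic 0, f u) + ∫ u in 0..x, f u :=
    funext (integral_Iic_eq_add_intervalIntegral hf 0)
  rw [h]
  exact (intervalIntegral.integral_hasDerivAt_right hf.intervalIntegrable
    hf.aestronglyMeasurable.stronglyMeasurableAtFilter hfc.continuousAt).const_add _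

theorem tendsto_integral_Iic_atBot (hf : Integrable f) :
    Tendsto (fun x => ∫ u in Iic x, f u) atBot (𝓝 0) := by
  have h := (intervalIntegral_tendsto_integral_Iic 0 hf.integrableOn tendsto_id).const_sub
    (∫ u in Iic 0, f u)
  rw [sub_self] at h
  refine h.congr fun x => ?_
  rw [integral_Iic_eq_add_intervalIntegral hf x 0, id, add_sub_cancel_right]

end IntegralIic

theorem integral_Ioo_eq_sub_of_hasDerivAt_of_nonneg {f f' : ℝ → ℝ} {a b L : ℝ} (hab : a < b)
    (hderiv : ∀ x ∈ Ioc a b, HasDerivAt f (f' x) x) (hpos : ∀ x ∈ Ioo a b, 0 ≤ f' x)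
    (ha : Tendsto f (𝓝[>] a) (𝓝 L)) :
    ∫ x in Ioo a b, f' x = f b - L := by
  set F := Function.update f a L
  have hFderiv : ∀ x ∈ Ioo a b, HasDerivAt F (f' x) x := fun x hx =>
    (hderiv x (Ioo_subset_Ioc_self hx)).congr_of_eventuallyEq <| by
      filter_upwards [Ioi_mem_nhds hx.1] with y hy using Function.update_of_ne hy.ne' _ _
  have hFcont : ContinuousOn F (Icc a b) := by
    rw [continuousOn_update_iff, Icc_sdiff_left]
    exact ⟨fun x hx => (hderiv x hx).continuousAt.continuousWithinAt,
      fun _ => ha.mono_left (nhdsWithin_mono _ Ioc_subset_Ioi_self)⟩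
  have hint : IntervalIntegrable f' volume a b := by
    refine intervalIntegral.intervalIntegrable_deriv_of_nonneg (g := F) ?_ ?_ ?_ <;>
      simpa only [uIcc_of_le hab.le, min_eq_left hab.le, max_eq_right hab.le]
  rw [← integral_Ioc_eq_integral_Ioo, ← intervalIntegral.integral_of_le hab.le,
    intervalIntegral.integral_eq_sub_of_hasDerivAt_of_le hab.le hFcont hFderiv hint]
  simp [F, hab.ne']

theorem integrable_exp_neg_sq_div_two : Integrable fun u : ℝ => exp (-(u ^ 2) / 2) := by
  refine (integrable_exp_neg_mul_sq (b := 1 / 2) (by norm_num)).congr (.of_forall fun u => ?_)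
  ring_nf

theorem hasDerivAt_Phi (x : ℝ) :
    HasDerivAt Phi ((√(2 * π))⁻¹ * exp (-(x ^ 2) / 2)) x :=
  (hasDerivAt_integral_Iic integrable_exp_neg_sq_div_two (by fun_prop) x).const_mul _

theorem tendsto_Phi_atBot : Tendsto Phi atBot (𝓝 0) := by
  have h := (tendsto_integral_Iic_atBot integrable_exp_neg_sq_div_two).const_mul (√(2 * π))⁻¹
  rw [mul_zero] at h
  exact h

noncomputable def stableBridgeArg (c p t z v : ℝ) : ℝ := c * (p * v - t * z) / √(v * z * (z - v))

noncomputable def stableBridgeMoment (c T t z y : ℝ) : ℝ :=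
  (t / T) * z * (Phi (stableBridgeArg c T t z y)
    - exp (2 * c ^ 2 * t * (T - t) / z) * Phi (stableBridgeArg c (2 * t - T) t z y))

section StableBridge

variable {c T t z v : ℝ}

theorem hasDerivAt_stableBridgeArg (p : ℝ) (hv : v ∈ Ioo 0 z) :
    HasDerivAt (stableBridgeArg c p t z)
      (c * z ^ 2 * ((p - 2 * t) * v + t * z) / (2 * √(v * z * (z - v)) ^ 3)) v := by
  obtain ⟨hv0, hvz⟩ := hv
  have hz : z ≠ 0 := (hv0.trans hvz).ne'
  have hq : 0 < v * z * (z - v) := mul_pos (mul_pos hv0 (hv0.trans hvz)) (sub_pos.mpr hvz)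
  have hnum : HasDerivAt (fun v => c * (p * v - t * z)) (c * p) v := by
    simpa using (((hasDerivAt_id v).const_mul p).sub_const (t * z)).const_mul c
  have hden : HasDerivAt (fun v => v * z * (z - v)) (1 * z * (z - v) + v * z * (-1)) v :=
    ((hasDerivAt_id v).mul_const z).mul ((hasDerivAt_id v).const_sub z)
  refine (hnum.div (hden.sqrt hq.ne') (sqrt_pos.mpr hq).ne').congr_deriv ?_
  have hS2 := sq_sqrt hq.le
  have hS : √(v * z * (z - v)) ≠ 0 := (sqrt_pos.mpr hq).ne'
  set S := √(v * z * (z - v))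
  rw [show S ^ 3 = S ^ 2 * S by ring, hS2]
  field_simp
  linear_combination 2 * c * p * hS2

theorem tendsto_stableBridgeArg_nhdsGT_zero (hc : 0 < c) (ht : 0 < t) (hz : 0 < z) (p : ℝ) :
    Tendsto (stableBridgeArg c p t z) (𝓝[>] 0) atBot := by
  have hsqrt : Tendsto (fun v => √(v * z * (z - v))) (𝓝[>] 0) (𝓝[>] 0) := by
    refine tendsto_nhdsWithin_iff.mpr ⟨?_, ?_⟩
    · simpa using ((by fun_prop : Continuous fun v => √(v * z * (z - v))).tendsto 0).mono_left
        nhdsWithin_le_nhds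
    · filter_upwards [Ioo_mem_nhdsGT hz] with v hv
      exact sqrt_pos.mpr (mul_pos (mul_pos hv.1 hz) (sub_pos.mpr hv.2))
  have hnum : Tendsto (fun v => c * (p * v - t * z)) (𝓝[>] 0) (𝓝 (c * (p * 0 - t * z))) :=
    ((by fun_prop : Continuous fun v => c * (p * v - t * z)).tendsto 0).mono_left
      nhdsWithin_le_nhds
  exact hnum.neg_mul_atTop (by nlinarith [mul_pos ht hz]) (tendsto_inv_nhdsGT_zero.comp hsqrt)

theorem tendsto_stableBridgeMoment_nhdsGT_zero (hc : 0 < c) (ht : 0 < t) (hz : 0 < z) :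
    Tendsto (stableBridgeMoment c T t z) (𝓝[>] 0) (𝓝 0) := by
  have hPhi (p : ℝ) := tendsto_Phi_atBot.comp (tendsto_stableBridgeArg_nhdsGT_zero hc ht hz p)
  have h := ((hPhi T).sub ((hPhi (2 * t - T)).const_mul
    (exp (2 * c ^ 2 * t * (T - t) / z)))).const_mul (t / T * z)
  simp only [mul_zero, sub_zero] at h
  exact h

-- The prefactor `exp (2 c² t (T - t) / z)` is exactly the gap between the two Gaussian exponents,
-- so both terms of the derivative of `stableBridgeMoment` carry the same Gaussian factor.
theorem exp_mul_exp_neg_sq_stableBridgeArg (hv : v ∈ Ioo 0 z) :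
    exp (2 * c ^ 2 * t * (T - t) / z) * exp (-(stableBridgeArg c (2 * t - T) t z v ^ 2) / 2)
      = exp (-(stableBridgeArg c T t z v ^ 2) / 2) := by
  obtain ⟨hv0, hvz⟩ := hv
  have hz : z ≠ 0 := (hv0.trans hvz).ne'
  have hq : 0 < v * z * (z - v) := mul_pos (mul_pos hv0 (hv0.trans hvz)) (sub_pos.mpr hvz)
  have hzv : z - v ≠ 0 := (sub_pos.mpr hvz).ne'
  rw [← exp_add, stableBridgeArg, stableBridgeArg, div_pow, div_pow, sq_sqrt hq.le]
  congr 1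
  field_simp
  ring

theorem stableBridgeDen_eq (hv : v ∈ Ioo 0 z) :
    stableBridgeDen c T t z v = (√(2 * π))⁻¹ * exp (-(stableBridgeArg c T t z v ^ 2) / 2)
      * (c * t * (T - t) / T * z ^ 3 / √(v * z * (z - v)) ^ 3) := by
  obtain ⟨hv0, hvz⟩ := hv
  have hz := hv0.trans hvz
  have hq : 0 < v * z * (z - v) := mul_pos (mul_pos hv0 hz) (sub_pos.mpr hvz)
  have hbase : v - v ^ 2 / z = v * z * (z - v) / z ^ 2 := by field_simp
  have hpow : (v - v ^ 2 / z) ^ ((3 : ℝ) / 2) = √(v * z * (z - v)) ^ 3 / z ^ 3 := by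
    rw [rpow_div_two_eq_sqrt _ (hbase ▸ by positivity), hbase, sqrt_div' _ (sq_nonneg z),
      sqrt_sq hz.le, ← div_pow]
    norm_cast
  have hexp : -(c ^ 2 * (T * v - t * z) ^ 2) / (2 * v * z * (z - v))
      = -(stableBridgeArg c T t z v ^ 2) / 2 := by
    rw [stableBridgeArg, div_pow, sq_sqrt hq.le]
    field_simp
  rw [stableBridgeDen, hpow, hexp]
  field_simp

theorem stableBridgeDen_nonneg (hc : 0 ≤ c) (ht : 0 ≤ t) (htT : t ≤ T) (hv : v ∈ Ioo 0 z) :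
    0 ≤ stableBridgeDen c T t z v := by
  rw [stableBridgeDen_eq hv]
  have hTt : 0 ≤ T - t := sub_nonneg.mpr htT
  have hz : 0 ≤ z := (hv.1.trans hv.2).le
  have hT : 0 ≤ T := ht.trans htT
  positivity

theorem hasDerivAt_stableBridgeMoment (hv : v ∈ Ioo 0 z) :
    HasDerivAt (stableBridgeMoment c T t z) (v * stableBridgeDen c T t z v) v := by
  have hA := (hasDerivAt_Phi _).comp v (hasDerivAt_stableBridgeArg (c := c) (t := t) T hv)
  have hB := (hasDerivAt_Phi _).comp v
    (hasDerivAt_stableBridgeArg (c := c) (t := t) (2 * t - T) hv)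
  refine ((hA.sub (hB.const_mul (exp (2 * c ^ 2 * t * (T - t) / z)))).const_mul
    (t / T * z)).congr_deriv ?_
  rw [stableBridgeDen_eq hv]
  linear_combination -(t / T * z) * (√(2 * π))⁻¹ *
    (c * z ^ 2 * ((2 * t - T - 2 * t) * v + t * z) / (2 * √(v * z * (z - v)) ^ 3)) *
    exp_mul_exp_neg_sq_stableBridgeArg (c := c) (T := T) (t := t) hv

end StableBridge

/-- Incomplete first moment of the stable-1/2 bridge marginal. -/
theorem stable_half_bridge_incomplete_first_moment (c T t z : ℝ)
    (hc : 0 < c) (ht : 0 < t) (htT : t < T) (hz : 0 < z)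
    (y : ℝ) (hy : y ∈ Set.Ioo 0 z) :
    (∫ u in Set.Ioo (0 : ℝ) y, u * stableBridgeDen c T t z u)
      = (t / T) * z *
          (Phi (c * (T * y - t * z) / Real.sqrt (y * z * (z - y)))
            - Real.exp (2 * c ^ 2 * t * (T - t) / z) *
                Phi (c * ((2 * t - T) * y - t * z) / Real.sqrt (y * z * (z - y)))) := by
  have hmem (u : ℝ) (hu : u ∈ Ioc 0 y) : u ∈ Ioo 0 z := ⟨hu.1, hu.2.trans_lt hy.2⟩
  rw [integral_Ioo_eq_sub_of_hasDerivAt_of_nonneg hy.1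
    (fun u hu => hasDerivAt_stableBridgeMoment (hmem u hu))
    (fun u hu => mul_nonneg hu.1.le
      (stableBridgeDen_nonneg hc.le ht.le htT.le (hmem u (Ioo_subset_Ioc_self hu))))
    (tendsto_stableBridgeMoment_nhdsGT_zero hc ht hz), sub_zero]
  rfl
end

section
/- Let f_{tT}(y;z) = (ct(T−t)/(πT))(z² + c²T²)/((y² + c²t²)((z−y)² + c²(T−t)²)) be the Cauchy bridge density. Then the second moment exists and ∫_{−∞}^∞ y² f_{tT}(y;z) dy = (t/T)(z² + c²T(T−t)). -/
open MeasureTheory Real Set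

/-- Marginal density at time `t` of a Cauchy bridge from `0` at time `0` to `z` at
time `T`, with scale parameter `c`. -/
noncomputable def cauchyBridgeDen (c T t z y : ℝ) : ℝ :=
  (c * t * (T - t) / (Real.pi * T)) *
    ((z ^ 2 + c ^ 2 * T ^ 2) /
      ((y ^ 2 + c ^ 2 * t ^ 2) * ((z - y) ^ 2 + c ^ 2 * (T - t) ^ 2)))

/-!
With `a = ct` and `b = c(T - t)`, the bridge density is a multiple of
`((y² + a²)((z - y)² + b²))⁻¹`, and `y² / (y² + a²) = 1 - a² / (y² + a²)` reduces the second
moment to `∫ ((z - y)² + b²)⁻¹ = π / b` and to the Cauchy convolution identity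
`∫ ((y² + a²)((z - y)² + b²))⁻¹ = π (a + b) / (a b (z² + (a + b)²))`, i.e. to the normalisation
of the bridge density. For `z ≠ 0` the convolution identity follows from a partial-fraction
primitive (one logarithm and two arctangents); at `z = 0` the partial fractions degenerate when
`a = b`, and the identity follows instead by continuity in `z`.
-/

open Filter Topology

section CauchyKernel

variable {a b : ℝ}

lemma integrable_inv_sub_sq_add_sq (z : ℝ) (hb : b ≠ 0) :
    Integrable fun y : ℝ => ((z - y) ^ 2 + b ^ 2)⁻¹ := by
  refine (((integrable_inv_one_add_sq.comp_sub_left (z / b)).comp_div hb).const_mul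
    (b ^ 2)⁻¹).congr (.of_forall fun y => ?_)
  field_simp
  ring

lemma integral_inv_sub_sq_add_sq (z : ℝ) (hb : 0 < b) :
    ∫ y : ℝ, ((z - y) ^ 2 + b ^ 2)⁻¹ = π / b := by
  have h : ∀ y, ((z - y) ^ 2 + b ^ 2)⁻¹ = (b ^ 2)⁻¹ * (1 + ((z - y) / b) ^ 2)⁻¹ := fun y => by
    field_simp
    ring
  simp_rw [h, integral_const_mul, integral_sub_left_eq_self (fun x => (1 + (x / b) ^ 2)⁻¹),
    Measure.integral_comp_div (fun x => (1 + x ^ 2)⁻¹), integral_univ_inv_one_add_sq,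
    abs_of_pos hb, smul_eq_mul]
  field_simp

lemma hasDerivAt_arctan_sub_div (x₀ y : ℝ) (ha : a ≠ 0) :
    HasDerivAt (fun y => arctan ((y - x₀) / a)) (a / ((y - x₀) ^ 2 + a ^ 2)) y := by
  refine (((hasDerivAt_id' y).sub_const x₀).div_const a).arctan.congr_deriv ?_
  field_simp
  ring

lemma tendsto_arctan_sub_div_atTop (x₀ : ℝ) (ha : 0 < a) :
    Tendsto (fun y => arctan ((y - x₀) / a)) atTop (𝓝 (π / 2)) :=
  (tendsto_nhds_of_tendsto_nhdsWithin tendsto_arctan_atTop).comp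
    ((tendsto_atTop_add_const_right _ _ tendsto_id).atTop_div_const ha)

lemma tendsto_arctan_sub_div_atBot (x₀ : ℝ) (ha : 0 < a) :
    Tendsto (fun y => arctan ((y - x₀) / a)) atBot (𝓝 (-(π / 2))) :=
  (tendsto_nhds_of_tendsto_nhdsWithin tendsto_arctan_atBot).comp
    ((tendsto_atBot_add_const_right _ _ tendsto_id).atBot_div_const ha)

lemma tendsto_log_sub_log_cobounded (z : ℝ) (ha : a ≠ 0) (hb : b ≠ 0) :
    Tendsto (fun y => log (y ^ 2 + a ^ 2) - log ((z - y) ^ 2 + b ^ 2))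
      (Bornology.cobounded ℝ) (𝓝 0) := by
  have hratio : Tendsto (fun u : ℝ => (1 + a ^ 2 * u ^ 2) / ((z * u - 1) ^ 2 + b ^ 2 * u ^ 2))
      (𝓝 0) (𝓝 1) := by
    have : ContinuousAt (fun u : ℝ => (1 + a ^ 2 * u ^ 2) / ((z * u - 1) ^ 2 + b ^ 2 * u ^ 2)) 0 :=
      ContinuousAt.div (by fun_prop) (by fun_prop) (by norm_num)
    simpa using this.tendsto
  have hlog := ((continuousAt_log one_ne_zero).tendsto.comp hratio).comp tendsto_inv₀_cobounded
  rw [log_one] at hlog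
  refine hlog.congr' ((Bornology.eventually_ne_cobounded 0).mono fun y hy => ?_)
  have hQ : (z - y) ^ 2 + b ^ 2 ≠ 0 := by positivity
  simp only [Function.comp]
  rw [← log_div (by positivity) hQ]
  congr 1
  field_simp

lemma integrable_inv_mul_sub_sq_add_sq (z : ℝ) (ha : 0 < a) (hb : b ≠ 0) :
    Integrable fun y : ℝ => ((y ^ 2 + a ^ 2) * ((z - y) ^ 2 + b ^ 2))⁻¹ := by
  refine ((integrable_inv_sub_sq_add_sq z hb).const_mul (a ^ 2)⁻¹).mono'
    (Continuous.aestronglyMeasurable ?_) (.of_forall fun y => ?_)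
  · exact (by fun_prop : Continuous _).inv₀ fun y => by positivity
  · have hQ : 0 < (z - y) ^ 2 + b ^ 2 := by positivity
    rw [norm_inv, norm_of_nonneg (by positivity), ← mul_inv]
    gcongr
    nlinarith [sq_nonneg y]

lemma hasDerivAt_cauchy_primitive (α β δ z y : ℝ) (ha : a ≠ 0) (hb : b ≠ 0) :
    HasDerivAt (fun y => α / 2 * (log (y ^ 2 + a ^ 2) - log ((z - y) ^ 2 + b ^ 2))
        + β / a * arctan (y / a) + δ / b * arctan ((y - z) / b))
      ((α * y + β) / (y ^ 2 + a ^ 2) + (α * (z - y) + δ) / ((z - y) ^ 2 + b ^ 2)) y := by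
  have hP : HasDerivAt (fun y => y ^ 2 + a ^ 2) (2 * y) y := by
    simpa using (hasDerivAt_pow 2 y).add_const (a ^ 2)
  have hQ : HasDerivAt (fun y => (z - y) ^ 2 + b ^ 2) (-(2 * (z - y))) y := by
    simpa using (((hasDerivAt_id' y).const_sub z).pow 2).add_const (b ^ 2)
  have harctan : HasDerivAt (fun y => arctan (y / a)) (a / (y ^ 2 + a ^ 2)) y := by
    simpa using hasDerivAt_arctan_sub_div 0 y ha
  have hP0 : y ^ 2 + a ^ 2 ≠ 0 := by positivity
  have hQ0 : (z - y) ^ 2 + b ^ 2 ≠ 0 := by positivity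
  refine ((((hP.log hP0).sub (hQ.log hQ0)).const_mul (α / 2)).add
    (harctan.const_mul (β / a))).add
    ((hasDerivAt_arctan_sub_div z y hb).const_mul (δ / b)) |>.congr_deriv ?_
  rw [show (y - z) ^ 2 = (z - y) ^ 2 by ring]
  field_simp
  ring

lemma exists_cauchy_partial_fractions {z : ℝ} (hz : z ≠ 0) (ha : a ≠ 0) (hb : b ≠ 0) :
    ∃ α β δ : ℝ,
      (∀ y, (α * y + β) * ((z - y) ^ 2 + b ^ 2) + (α * (z - y) + δ) * (y ^ 2 + a ^ 2) = 1) ∧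
      β / a + δ / b = (a + b) / (a * b * (z ^ 2 + (a + b) ^ 2)) := by
  have hΔ : (z ^ 2 + (a + b) ^ 2) * (z ^ 2 + (a - b) ^ 2) ≠ 0 := by positivity
  refine ⟨2 * z / ((z ^ 2 + (a + b) ^ 2) * (z ^ 2 + (a - b) ^ 2)),
    (z ^ 2 + b ^ 2 - a ^ 2) / ((z ^ 2 + (a + b) ^ 2) * (z ^ 2 + (a - b) ^ 2)),
    (z ^ 2 + a ^ 2 - b ^ 2) / ((z ^ 2 + (a + b) ^ 2) * (z ^ 2 + (a - b) ^ 2)), fun y => ?_, ?_⟩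
  · field_simp
    ring
  · field_simp
    ring

lemma integral_inv_mul_sub_sq_add_sq_of_ne_zero {z : ℝ} (hz : z ≠ 0) (ha : 0 < a) (hb : 0 < b) :
    ∫ y : ℝ, ((y ^ 2 + a ^ 2) * ((z - y) ^ 2 + b ^ 2))⁻¹
      = π * (a + b) / (a * b * (z ^ 2 + (a + b) ^ 2)) := by
  obtain ⟨α, β, δ, hpartial, hresidue⟩ := exists_cauchy_partial_fractions hz ha.ne' hb.ne'
  have hderiv (y : ℝ) := (hasDerivAt_cauchy_primitive α β δ z y ha.ne' hb.ne').congr_deriv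
    (g' := ((y ^ 2 + a ^ 2) * ((z - y) ^ 2 + b ^ 2))⁻¹) (by
      have : y ^ 2 + a ^ 2 ≠ 0 := by positivity
      have : (z - y) ^ 2 + b ^ 2 ≠ 0 := by positivity
      field_simp
      linear_combination hpartial y)
  have hlog := tendsto_log_sub_log_cobounded z ha.ne' hb.ne'
  have hbot := (((hlog.mono_left IsOrderBornology.atBot_le_cobounded).const_mul (α / 2)).add
    ((tendsto_arctan_sub_div_atBot 0 ha).const_mul (β / a))).add
    ((tendsto_arctan_sub_div_atBot z hb).const_mul (δ / b))
  have htop := (((hlog.mono_left IsOrderBornology.atTop_le_cobounded).const_mul (α / 2)).add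
    ((tendsto_arctan_sub_div_atTop 0 ha).const_mul (β / a))).add
    ((tendsto_arctan_sub_div_atTop z hb).const_mul (δ / b))
  simp only [sub_zero] at hbot htop
  rw [integral_of_hasDerivAt_of_tendsto hderiv
    (integrable_inv_mul_sub_sq_add_sq z ha hb.ne') hbot htop, mul_div_assoc, ← hresidue]
  ring

lemma continuous_integral_inv_mul_sub_sq_add_sq (ha : 0 < a) (hb : 0 < b) :
    Continuous fun z : ℝ => ∫ y : ℝ, ((y ^ 2 + a ^ 2) * ((z - y) ^ 2 + b ^ 2))⁻¹ := by
  have hbound : Integrable fun y : ℝ => (b ^ 2)⁻¹ * (y ^ 2 + a ^ 2)⁻¹ := by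
    simpa using (integrable_inv_sub_sq_add_sq 0 ha.ne').const_mul (b ^ 2)⁻¹
  refine continuous_of_dominated (fun z => ?_) (fun z => .of_forall fun y => ?_) hbound
    (.of_forall fun y => ?_)
  · exact (integrable_inv_mul_sub_sq_add_sq z ha hb.ne').aestronglyMeasurable
  · rw [norm_inv, norm_of_nonneg (by positivity), ← mul_inv, mul_comm]
    gcongr
    nlinarith [sq_nonneg (z - y)]
  · exact (by fun_prop : Continuous _).inv₀ fun z => by positivity

theorem integral_inv_mul_sub_sq_add_sq (z : ℝ) (ha : 0 < a) (hb : 0 < b) :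
    ∫ y : ℝ, ((y ^ 2 + a ^ 2) * ((z - y) ^ 2 + b ^ 2))⁻¹
      = π * (a + b) / (a * b * (z ^ 2 + (a + b) ^ 2)) := by
  have hrhs : Continuous fun z : ℝ => π * (a + b) / (a * b * (z ^ 2 + (a + b) ^ 2)) :=
    continuous_const.div (by fun_prop) fun z => by positivity
  refine congrFun ((continuous_integral_inv_mul_sub_sq_add_sq ha hb).ext_on
    (dense_compl_singleton 0) hrhs fun z hz => ?_) z
  exact integral_inv_mul_sub_sq_add_sq_of_ne_zero hz ha hb

theorem integral_sq_div_mul_sub_sq_add_sq (z : ℝ) (ha : 0 < a) (hb : 0 < b) :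
    ∫ y : ℝ, y ^ 2 / ((y ^ 2 + a ^ 2) * ((z - y) ^ 2 + b ^ 2))
      = π / b - π * a * (a + b) / (b * (z ^ 2 + (a + b) ^ 2)) := by
  have hsplit : ∀ y : ℝ, y ^ 2 / ((y ^ 2 + a ^ 2) * ((z - y) ^ 2 + b ^ 2))
      = ((z - y) ^ 2 + b ^ 2)⁻¹ - a ^ 2 * ((y ^ 2 + a ^ 2) * ((z - y) ^ 2 + b ^ 2))⁻¹ := by
    intro y
    have : y ^ 2 + a ^ 2 ≠ 0 := by positivity
    have : (z - y) ^ 2 + b ^ 2 ≠ 0 := by positivity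
    field_simp
    ring
  simp_rw [hsplit]
  rw [integral_sub (integrable_inv_sub_sq_add_sq z hb.ne')
    ((integrable_inv_mul_sub_sq_add_sq z ha hb.ne').const_mul _), integral_const_mul,
    integral_inv_sub_sq_add_sq z hb, integral_inv_mul_sub_sq_add_sq z ha hb]
  field_simp

end CauchyKernel

/-- Second moment of the Cauchy bridge marginal. -/
theorem cauchy_bridge_second_moment (c T t z : ℝ)
    (hc : 0 < c) (ht : 0 < t) (htT : t < T) :
    (∫ y : ℝ, y ^ 2 * cauchyBridgeDen c T t z y)
      = (t / T) * (z ^ 2 + c ^ 2 * T * (T - t)) := by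
  have hT : 0 < T := ht.trans htT
  have hTt : 0 < T - t := sub_pos.2 htT
  have hdensity : ∀ y : ℝ, y ^ 2 * cauchyBridgeDen c T t z y
      = c * t * (T - t) * (z ^ 2 + c ^ 2 * T ^ 2) / (π * T)
        * (y ^ 2 / ((y ^ 2 + (c * t) ^ 2) * ((z - y) ^ 2 + (c * (T - t)) ^ 2))) := fun y => by
    unfold cauchyBridgeDen
    ring
  simp_rw [hdensity]
  rw [integral_const_mul, integral_sq_div_mul_sub_sq_add_sq z (mul_pos hc ht) (mul_pos hc hTt)]
  have : z ^ 2 + (c * t + c * (T - t)) ^ 2 ≠ 0 := by positivity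
  field_simp
  ring
end
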